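/- The random integrals ∫_{‖h‖ ≥ a_n} exp( −(1/2)(h − U_n)ᵀ V (h − U_n) ) dh converge to 0 in probability as n → ∞. -/

import Mathlib

open MeasureTheory ProbabilityTheory Filter BoundedContinuousFunction
open scoped Topology ENNReal BigOperators

/-! The integrand is `G (h - U m ω)` with `G x = exp (-½ xᵀ V x)`, which is integrable because `V`
is positive definite. After translating by `U m ω`, the integral is at most the tail
`∫_{‖h‖ ≥ a m - ‖U m ω‖} G`, so once `R` is chosen with `∫_{‖h‖ ≥ R} G < ε` it can reach `ε` only
if `‖U m ω‖ ≥ a m - R`. Weak convergence makes `(U m)` tight and `a m - R → ∞`, so the probability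
of that event tends to `0`. -/

theorem exists_pos_mul_sq_norm_le_of_sq_homogeneous {E : Type*} [NormedAddCommGroup E]
    [NormedSpace ℝ E] [FiniteDimensional ℝ E] {Q : E → ℝ} (hQc : Continuous Q)
    (hQhom : ∀ (t : ℝ) (x : E), Q (t • x) = t ^ 2 * Q x) (hQpos : ∀ x, x ≠ 0 → 0 < Q x) :
    ∃ c, 0 < c ∧ ∀ x, c * ‖x‖ ^ 2 ≤ Q x := by
  have hQ0 : Q 0 = 0 := by simpa using hQhom 0 0
  rcases subsingleton_or_nontrivial E with hE | hE
  · exact ⟨1, one_pos, fun x => by simp [Subsingleton.elim x 0, hQ0]⟩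
  obtain ⟨x₀, hx₀, hmin⟩ := (isCompact_sphere (0 : E) 1).exists_isMinOn
    (NormedSpace.sphere_nonempty.2 zero_le_one) hQc.continuousOn
  have hx₀ : ‖x₀‖ = 1 := by simpa using hx₀
  refine ⟨Q x₀, hQpos x₀ (norm_ne_zero_iff.1 (by simp [hx₀])), fun x => ?_⟩
  rcases eq_or_ne x 0 with rfl | hx
  · simp [hQ0]
  have hxn : 0 < ‖x‖ := norm_pos_iff.2 hx
  have hunit : Q x₀ ≤ Q (‖x‖⁻¹ • x) := hmin (by simp [norm_smul, hxn.ne'])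
  calc Q x₀ * ‖x‖ ^ 2 ≤ Q (‖x‖⁻¹ • x) * ‖x‖ ^ 2 := by gcongr
    _ = Q x := by rw [hQhom]; field_simp

theorem Matrix.PosDef.exists_pos_mul_sq_norm_le {n : Type*} [Fintype n] {V : Matrix n n ℝ}
    (hV : V.PosDef) :
    ∃ c, 0 < c ∧ ∀ x : EuclideanSpace ℝ n, c * ‖x‖ ^ 2 ≤ ∑ i, ∑ j, x i * V i j * x j := by
  refine exists_pos_mul_sq_norm_le_of_sq_homogeneous (by fun_prop)
    (fun t x => ?_) (fun x hx => ?_)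
  · simp only [PiLp.smul_apply, smul_eq_mul, Finset.mul_sum]
    exact Finset.sum_congr rfl fun i _ => Finset.sum_congr rfl fun j _ => by ring
  · have := hV.dotProduct_mulVec_pos (x := x.ofLp) (by simpa using hx)
    simpa [dotProduct, Matrix.mulVec, Finset.mul_sum, mul_assoc] using this

theorem integrable_exp_neg_mul_sq_norm {E : Type*} [NormedAddCommGroup E]
    [InnerProductSpace ℝ E] [FiniteDimensional ℝ E] [MeasurableSpace E] [BorelSpace E]
    {b : ℝ} (hb : 0 < b) : Integrable fun x : E => Real.exp (-b * ‖x‖ ^ 2) := by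
  refine (GaussianFourier.integrable_cexp_neg_mul_sq_norm_add (V := E) (b := b)
    (by simpa using hb) 0 0).norm.congr (.of_forall fun x => ?_)
  simp only [Complex.norm_exp, zero_mul, add_zero]
  norm_cast

theorem Matrix.PosDef.integrable_exp_neg_half_quadForm {n : Type*} [Fintype n]
    {V : Matrix n n ℝ} (hV : V.PosDef) :
    Integrable fun x : EuclideanSpace ℝ n => Real.exp (-(1 / 2) * ∑ i, ∑ j, x i * V i j * x j) := by
  obtain ⟨c, hc, hcV⟩ := hV.exists_pos_mul_sq_norm_le
  refine (integrable_exp_neg_mul_sq_norm (half_pos hc)).mono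
    (by fun_prop) (.of_forall fun x => ?_)
  simp only [Real.norm_eq_abs, Real.abs_exp, Real.exp_le_exp]
  nlinarith [hcV x]

section Tail

variable {E : Type*} [NormedAddCommGroup E]

theorem antitone_setOf_le_norm : Antitone fun r : ℝ => {x : E | r ≤ ‖x‖} :=
  fun _ _ hrs _ hx => hrs.trans hx

variable [MeasurableSpace E] {μ : Measure E}

theorem tendsto_setIntegral_le_norm_atTop [OpensMeasurableSpace E] {F : Type*}
    [NormedAddCommGroup F] [NormedSpace ℝ F] {G : E → F} (hG : Integrable G μ) :
    Tendsto (fun r : ℝ => ∫ x in {x | r ≤ ‖x‖}, G x ∂μ) atTop (𝓝 0) := by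
  have hempty : (⋂ r : ℝ, {x : E | r ≤ ‖x‖}) = ∅ :=
    Set.eq_empty_of_forall_notMem fun x hx =>
      (lt_add_one ‖x‖).not_ge (Set.mem_iInter.1 hx (‖x‖ + 1))
  simpa [hempty] using tendsto_setIntegral_of_antitone
    (fun r => measurableSet_le measurable_const measurable_norm) antitone_setOf_le_norm
    ⟨0, hG.integrableOn⟩

theorem tendsto_measureReal_le_norm_atTop [OpensMeasurableSpace E] [IsFiniteMeasure μ] :
    Tendsto (fun r : ℝ => μ.real {x : E | r ≤ ‖x‖}) atTop (𝓝 0) := by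
  simpa using tendsto_setIntegral_le_norm_atTop (integrable_const (1 : ℝ)) (μ := μ)

theorem antitone_setIntegral_le_norm {G : E → ℝ} (hG : Integrable G μ) (hG0 : 0 ≤ G) :
    Antitone fun r : ℝ => ∫ x in {x | r ≤ ‖x‖}, G x ∂μ := fun _ _ hrs =>
  setIntegral_mono_set hG.integrableOn (.of_forall hG0)
    (antitone_setOf_le_norm hrs).eventuallyLE

theorem setIntegral_le_norm_comp_sub_le [MeasurableAdd E] [μ.IsAddRightInvariant]
    {G : E → ℝ} (hG : Integrable G μ) (hG0 : 0 ≤ G) (u : E) (r : ℝ) :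
    ∫ x in {x | r ≤ ‖x‖}, G (x - u) ∂μ ≤ ∫ x in {x | r - ‖u‖ ≤ ‖x‖}, G x ∂μ := by
  have hsub := measurePreserving_sub_right μ u
  rw [← hsub.setIntegral_preimage_emb (measurableEmbedding_subRight u) G {x | r - ‖u‖ ≤ ‖x‖}]
  refine setIntegral_mono_set (hsub.integrable_comp_of_integrable hG).integrableOn
    (.of_forall fun x => hG0 (x - u)) (LE.le.eventuallyLE fun x hx => ?_)
  change r ≤ ‖x‖ at hx
  change r - ‖u‖ ≤ ‖x - u‖
  linarith [norm_sub_norm_le x u]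

theorem sub_le_norm_of_le_setIntegral_comp_sub [MeasurableAdd E] [μ.IsAddRightInvariant]
    {G : E → ℝ} (hG : Integrable G μ) (hG0 : 0 ≤ G) {ε r R : ℝ} {u : E}
    (hR : ∫ x in {x | R ≤ ‖x‖}, G x ∂μ < ε) (hε : ε ≤ ∫ x in {x | r ≤ ‖x‖}, G (x - u) ∂μ) :
    r - R ≤ ‖u‖ := by
  by_contra! hu
  exact hR.not_ge <| hε.trans <| (setIntegral_le_norm_comp_sub_le hG hG0 u r).trans
    (antitone_setIntegral_le_norm hG hG0 (by linarith))

end Tail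

section NormRamp

variable {E : Type*} [NormedAddCommGroup E]

def normRamp (N : ℝ) : E →ᵇ ℝ :=
  ofNormedAddCommGroup (fun x => min 1 (max (‖x‖ - N) 0)) (by fun_prop) 1 fun x => by
    rw [Real.norm_eq_abs, abs_le]
    constructor <;> linarith [min_le_left 1 (max (‖x‖ - N) 0), le_max_right (‖x‖ - N) 0,
      le_min zero_le_one (le_max_right (‖x‖ - N) 0)]

theorem normRamp_apply (N : ℝ) (x : E) : normRamp N x = min 1 (max (‖x‖ - N) 0) := rfl

theorem normRamp_nonneg (N : ℝ) (x : E) : 0 ≤ normRamp N x :=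
  le_min zero_le_one (le_max_right _ _)

theorem normRamp_eq_one {N : ℝ} {x : E} (hx : N + 1 ≤ ‖x‖) : normRamp N x = 1 :=
  min_eq_left (le_max_of_le_left (by linarith))

theorem normRamp_le_indicator (N : ℝ) (x : E) :
    normRamp N x ≤ {x : E | N ≤ ‖x‖}.indicator 1 x := by
  by_cases hx : N ≤ ‖x‖
  · simp [hx, normRamp_apply]
  · simp [hx, normRamp_apply, (not_le.1 hx).le]

end NormRamp

section WeakConvergence

variable {Ω E : Type*} [MeasurableSpace Ω] {P : Measure Ω} [IsFiniteMeasure P]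
  [MeasurableSpace E] {μ : Measure E} [IsProbabilityMeasure μ] {X : ℕ → Ω → E}

/-- The random variables `X m` are not assumed measurable. Shifting `f` to `g ≥ 1` makes the limit
`∫ g dμ` positive, so `∫ g (X m) dP ≠ 0` eventually, which forces integrability. -/
theorem eventually_integrable_comp_of_tendsto_integral [TopologicalSpace E]
    [OpensMeasurableSpace E]
    (hX : ∀ f : E →ᵇ ℝ, Tendsto (fun m => ∫ ω, f (X m ω) ∂P) atTop (𝓝 (∫ x, f x ∂μ)))
    (f : E →ᵇ ℝ) : ∀ᶠ m in atTop, Integrable (fun ω => f (X m ω)) P := by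
  set g := f + const E (‖f‖ + 1)
  have hg : ∀ x, 1 ≤ g x := fun x => by
    have := (abs_le.1 ((Real.norm_eq_abs _).symm.trans_le (f.norm_coe_le_norm x))).1
    simp only [g, coe_add, Pi.add_apply, const_apply]
    linarith
  have hgμ : 0 < ∫ x, g x ∂μ := by
    have := integral_mono (integrable_const 1) (g.integrable μ) hg
    simp only [integral_const, probReal_univ, smul_eq_mul, one_mul] at this
    linarith
  filter_upwards [(hX g).eventually_const_lt hgμ] with m hm
  refine ((Integrable.of_integral_ne_zero hm.ne').sub (integrable_const (‖f‖ + 1))).congr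
    (.of_forall fun ω => ?_)
  simp [g]

theorem tendsto_measure_le_norm_of_tendsto_integral [NormedAddCommGroup E]
    [OpensMeasurableSpace E]
    (hX : ∀ f : E →ᵇ ℝ, Tendsto (fun m => ∫ ω, f (X m ω) ∂P) atTop (𝓝 (∫ x, f x ∂μ)))
    {b : ℕ → ℝ} (hb : Tendsto b atTop atTop) :
    Tendsto (fun m => P {ω | b m ≤ ‖X m ω‖}) atTop (𝓝 0) := by
  rw [← ENNReal.tendsto_toReal_iff (fun _ => measure_ne_top _ _) ENNReal.zero_ne_top,
    ENNReal.toReal_zero]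
  refine tendsto_order.2 ⟨fun t ht => .of_forall fun m => ht.trans_le ENNReal.toReal_nonneg,
    fun t ht => ?_⟩
  obtain ⟨N, hN⟩ := (tendsto_measureReal_le_norm_atTop (μ := μ)).eventually_lt_const ht |>.exists
  have hFμ : ∫ x, normRamp N x ∂μ < t := by
    have hmeas : MeasurableSet {x : E | N ≤ ‖x‖} :=
      measurableSet_le measurable_const measurable_norm
    refine lt_of_le_of_lt ?_ hN
    rw [← integral_indicator_one hmeas]
    exact integral_mono ((normRamp N).integrable μ) ((integrable_const 1).indicator hmeas)
      (normRamp_le_indicator N)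
  filter_upwards [(hX (normRamp N)).eventually_lt_const hFμ,
    eventually_integrable_comp_of_tendsto_integral hX (normRamp N),
    hb.eventually_ge_atTop (N + 1)] with m hlt hint hbm
  calc (P {ω | b m ≤ ‖X m ω‖}).toReal ≤ P.real {ω | 1 ≤ normRamp N (X m ω)} :=
        measureReal_mono fun ω (hω : b m ≤ ‖X m ω‖) => (normRamp_eq_one (hbm.trans hω)).ge
    _ ≤ ∫ ω, normRamp N (X m ω) ∂P := by
        simpa using mul_meas_ge_le_integral_of_nonneg
          (.of_forall fun ω => normRamp_nonneg N (X m ω)) hint 1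
    _ < t := hlt

end WeakConvergence

theorem stmt_11_general {d : ℕ} {Ω : Type*} [MeasureSpace Ω] [IsProbabilityMeasure (ℙ : Measure Ω)]
    (U : ℕ → Ω → EuclideanSpace ℝ (Fin d))
    (Umat : Matrix (Fin d) (Fin d) ℝ)
    (hweak : ∀ f : EuclideanSpace ℝ (Fin d) →ᵇ ℝ,
      Tendsto (fun m => ∫ ω, f (U m ω) ∂ℙ) atTop
        (𝓝 (∫ z : Fin d → ℝ, f ((EuclideanSpace.equiv (Fin d) ℝ).symm (Umat.mulVec z))
            ∂(Measure.pi fun _ => gaussianReal 0 1))))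
    (V : Matrix (Fin d) (Fin d) ℝ) (hV : V.PosDef)
    (a : ℕ → ℝ) (ha : Tendsto a atTop atTop) :
    ∀ ε : ℝ, 0 < ε →
      Tendsto (fun m => ℙ {ω | ε ≤ ∫ h in {h : EuclideanSpace ℝ (Fin d) | a m ≤ ‖h‖},
          Real.exp (-(1 / 2) * ∑ i, ∑ j, (h - U m ω) i * V i j * (h - U m ω) j)})
        atTop (𝓝 0) := by
  intro ε hε
  have hG := hV.integrable_exp_neg_half_quadForm
  have hG0 : 0 ≤ fun x : EuclideanSpace ℝ (Fin d) =>
      Real.exp (-(1 / 2) * ∑ i, ∑ j, x i * V i j * x j) := fun x => (Real.exp_pos _).le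
  obtain ⟨R, hR⟩ := ((tendsto_setIntegral_le_norm_atTop hG).eventually_lt_const hε).exists
  set γ : Measure (Fin d → ℝ) := Measure.pi fun _ => gaussianReal 0 1
  set φ := fun z : Fin d → ℝ => (EuclideanSpace.equiv (Fin d) ℝ).symm (Umat.mulVec z)
  have hφ : Measurable φ := by fun_prop
  have := Measure.isProbabilityMeasure_map hφ.aemeasurable (μ := γ)
  have hU : ∀ f : EuclideanSpace ℝ (Fin d) →ᵇ ℝ,
      Tendsto (fun m => ∫ ω, f (U m ω)) atTop (𝓝 (∫ x, f x ∂γ.map φ)) := fun f => by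
    rw [integral_map hφ.aemeasurable f.continuous.aestronglyMeasurable]
    exact hweak f
  have haR : Tendsto (fun m => a m - R) atTop atTop := by
    simpa only [sub_eq_add_neg] using tendsto_atTop_add_const_right _ (-R) ha
  exact tendsto_of_tendsto_of_tendsto_of_le_of_le tendsto_const_nhds
    (tendsto_measure_le_norm_of_tendsto_integral hU haR) (fun _ => zero_le)
    fun m => measure_mono fun ω hω => sub_le_norm_of_le_setIntegral_comp_sub hG hG0 hR hω

/-- If the random vectors `U n` converge weakly to `U·Z` with `Z` a standard
Gaussian vector and `U` an invertible matrix, `V` is symmetric positive definite, and `a n → ∞`,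
then the random integrals `∫_{‖h‖ ≥ a n} exp(-(1/2)(h - U n)ᵀ V (h - U n)) dh` converge to `0`
in probability. -/
theorem stmt_11 {d : ℕ} {Ω : Type*} [MeasureSpace Ω] [IsProbabilityMeasure (ℙ : Measure Ω)]
    (U : ℕ → Ω → EuclideanSpace ℝ (Fin d))
    (Umat : Matrix (Fin d) (Fin d) ℝ) (hUmat : IsUnit Umat.det)
    (hweak : ∀ f : EuclideanSpace ℝ (Fin d) →ᵇ ℝ,
      Tendsto (fun m => ∫ ω, f (U m ω) ∂ℙ) atTop
        (𝓝 (∫ z : Fin d → ℝ, f ((EuclideanSpace.equiv (Fin d) ℝ).symm (Umat.mulVec z))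
            ∂(Measure.pi fun _ => gaussianReal 0 1))))
    (V : Matrix (Fin d) (Fin d) ℝ) (hV : V.PosDef)
    (a : ℕ → ℝ) (ha_pos : ∀ m, 0 < a m) (ha : Tendsto a atTop atTop) :
    ∀ ε : ℝ, 0 < ε →
      Tendsto (fun m => ℙ {ω | ε ≤ ∫ h in {h : EuclideanSpace ℝ (Fin d) | a m ≤ ‖h‖},
          Real.exp (-(1 / 2) * ∑ i, ∑ j, (h - U m ω) i * V i j * (h - U m ω) j)})
        atTop (𝓝 0) :=
  stmt_11_general U Umat hweak V hV a ha
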